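/- arXiv:2109.07585 — 3 statements merged into one kernel-verified Lean document; each statement's English description precedes it below -/
import Mathlib

section
/- Let F be a properly parametrized Markov multi-map. Given n∈ℕ, if u∈L_n is an essential word and (x,u)∈S_{n+1} is a special labeled finite trajectory, then for every word v∈L_n with v≠u, (x,v) is not a labeled finite trajectory, i.e. (x,v)∉T_{n+1}. -/
open Set Topology

/-! ### Generic dynamical notions -/

/-- Topological transitivity of a map. -/
def TopTransitive {α : Type*} [TopologicalSpace α] (T : α → α) : Prop :=
  ∀ U V : Set α, IsOpen U → IsOpen V → U.Nonempty → V.Nonempty →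
    ∃ n : ℕ, (T^[n] '' U ∩ V).Nonempty

/-- Topological mixing of a map. -/
def TopMixing {α : Type*} [TopologicalSpace α] (T : α → α) : Prop :=
  ∀ U V : Set α, IsOpen U → IsOpen V → U.Nonempty → V.Nonempty →
    ∃ N : ℕ, ∀ n, N ≤ n → (T^[n] '' U ∩ V).Nonempty

/-- Density of the set of periodic points of a map. -/
def DensePeriodic {α : Type*} [TopologicalSpace α] (T : α → α) : Prop :=
  Dense {x : α | ∃ p : ℕ, 1 ≤ p ∧ T^[p] x = x}

/-- The metric `d(x,y) = sup_k |x_k - y_k|/(k+1)` on sequence spaces. -/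
noncomputable def dseq (x y : ℕ → ℝ) : ℝ := ⨆ k : ℕ, |x k - y k| / ((k : ℝ) + 1)

/-- The specification property for a map `T` with respect to a distance function `d`. -/
def SpecProp {α : Type*} (T : α → α) (d : α → α → ℝ) : Prop :=
  ∀ ε : ℝ, 0 < ε → ∃ N : ℕ, ∀ l : ℕ, ∀ x : Fin (l + 1) → α, ∀ a b : Fin (l + 1) → ℕ,
    (∀ k, 1 ≤ a k) → (∀ k, a k ≤ b k) →
    (∀ k : Fin l, b k.castSucc < a k.succ ∧ b k.castSucc + N ≤ a k.succ) →
    ∀ p : ℕ, b (Fin.last l) + N ≤ p →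
      ∃ z : α, T^[p] z = z ∧
        ∀ k : Fin (l + 1), ∀ i : ℕ, a k ≤ i → i ≤ b k → d (T^[i] z) (T^[i] (x k)) < ε

/-- The length `ℓ` of a (possibly degenerate) interval. -/
noncomputable def intervalLen (I : Set ℝ) : ℝ := sSup I - sInf I

/-! ### Markov multi-maps -/

/-- A Markov multi-map of the interval, given by a tuple
`(P, A₀, A₁, A₂, D, R, {f_a})` as in the paper, together with the derived data
(inverse maps `g`, interiors `D0`, `R0`, graphs `Gr`, `G0`) which are uniquely
determined by the defining equations below. -/
structure MarkovMultiMap where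
  A : Type
  finA : Finite A
  A0 : Set A
  A1 : Set A
  A2 : Set A
  P : Finset ℝ
  D : A → Set ℝ
  R : A → Set ℝ
  f : A → ℝ → ℝ
  g : A → ℝ → ℝ
  D0 : A → Set ℝ
  R0 : A → Set ℝ
  Gr : A → Set (ℝ × ℝ)
  G0 : A → Set (ℝ × ℝ)
  P_zero : (0 : ℝ) ∈ P
  P_one : (1 : ℝ) ∈ P
  P_sub : (P : Set ℝ) ⊆ Set.Icc 0 1
  A_cover : ∀ a : A, a ∈ A0 ∨ a ∈ A1 ∨ a ∈ A2
  A01 : A0 ∩ A1 = ∅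
  A02 : A0 ∩ A2 = ∅
  A12 : A1 ∩ A2 = ∅
  D_A0 : ∀ a ∈ A0, ∃ p ∈ P, ∃ q ∈ P, p < q ∧ (∀ r ∈ P, ¬(p < r ∧ r < q)) ∧ D a = Set.Icc p q
  D_A12 : ∀ a ∈ A1 ∪ A2, ∃ p ∈ P, D a = {p}
  R_A0 : ∀ a ∈ A0, ∃ u ∈ P, ∃ v ∈ P, u < v ∧ R a = Set.Icc u v
  R_A1 : ∀ a ∈ A1, ∃ u ∈ P, ∃ v ∈ P, u < v ∧ R a = Set.Icc u v ∧
    Set.Icc u v ∩ (P : Set ℝ) = {u, v}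
  R_A2 : ∀ a ∈ A2, ∃ u ∈ P, R a = {u}
  f_homeo : ∀ a ∈ A0, ContinuousOn (f a) (D a) ∧ Set.BijOn (f a) (D a) (R a)
  g_A0 : ∀ a ∈ A0, (∀ x ∈ D a, g a (f a x) = x) ∧ ∀ y ∈ R a, g a y ∈ D a ∧ f a (g a y) = y
  g_A12 : ∀ a ∈ A1 ∪ A2, ∀ y ∈ R a, g a y ∈ D a
  cover : Set.Icc (0 : ℝ) 1 = ⋃ a : A, D a
  D0_A0 : ∀ a ∈ A0, D0 a = interior (D a)
  D0_A12 : ∀ a ∈ A1 ∪ A2, D0 a = D a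
  R0_A01 : ∀ a ∈ A0 ∪ A1, R0 a = interior (R a)
  R0_A2 : ∀ a ∈ A2, R0 a = R a
  Gr_A0 : ∀ a ∈ A0, Gr a = {q : ℝ × ℝ | q.1 ∈ D a ∧ q.2 = f a q.1}
  Gr_A12 : ∀ a ∈ A1 ∪ A2, Gr a = (D a) ×ˢ (R a)
  G0_A0 : ∀ a ∈ A0, G0 a = {q : ℝ × ℝ | q.1 ∈ D0 a ∧ q.2 = f a q.1}
  G0_A1 : ∀ a ∈ A1, G0 a = (D a) ×ˢ (R0 a)
  G0_A2 : ∀ a ∈ A2, G0 a = Gr a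

namespace MarkovMultiMap

variable (M : MarkovMultiMap)

/-- The graph `G(F)` of the multi-map. -/
def GF : Set (ℝ × ℝ) := ⋃ a : M.A, M.Gr a

/-- `F` is properly parametrized: the sets `G₀(a)` partition `G(F)`. -/
def ProperlyParametrized : Prop :=
  (⋃ a : M.A, M.G0 a) = M.GF ∧ ∀ a b : M.A, a ≠ b → Disjoint (M.G0 a) (M.G0 b)

/-- The forward trajectory space `X`. -/
def X : Set (ℕ → ℝ) :=
  {x | (∀ k, x k ∈ Set.Icc (0 : ℝ) 1) ∧ ∀ k, (x k, x (k + 1)) ∈ M.GF}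

/-- The left-shift map `T` on the forward trajectory space. -/
def shift : M.X → M.X :=
  fun x => ⟨fun k => x.1 (k + 1), ⟨fun k => x.2.1 (k + 1), fun k => x.2.2 (k + 1)⟩⟩

/-- The inverse trajectory (inverse limit) space `Y`, encoded by `y k = y_{-k}`. -/
def Y : Set (ℕ → ℝ) :=
  {y | (∀ k, y k ∈ Set.Icc (0 : ℝ) 1) ∧ ∀ k, (y (k + 1), y k) ∈ M.GF}

/-- The right-shift map `S` on the inverse limit space (in the encoding `y k = y_{-k}`). -/
def ishift : M.Y → M.Y :=
  fun y => ⟨fun k => y.1 (k + 1), ⟨fun k => y.2.1 (k + 1), fun k => y.2.2 (k + 1)⟩⟩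

/-- The space `X_n` of finite trajectories of length `n`. -/
def finTraj (n : ℕ) : Set (Fin n → ℝ) :=
  {x | (∀ i, x i ∈ Set.Icc (0 : ℝ) 1) ∧
    ∀ i : Fin n, ∀ h : (i : ℕ) + 1 < n, (x i, x ⟨(i : ℕ) + 1, h⟩) ∈ M.GF}

/-- The associated nearest-neighbor SFT `Σ_M`. -/
def SFT : Set (ℕ → M.A) := {a | ∀ n : ℕ, M.D0 (a (n + 1)) ⊆ M.R0 (a n)}

/-- The word `u` (of length `n`) occurs in some point of `Z`. -/
def WordIn {n : ℕ} (u : Fin n → M.A) (Z : Set (ℕ → M.A)) : Prop :=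
  ∃ z ∈ Z, ∃ m : ℕ, ∀ i : Fin n, u i = z (m + (i : ℕ))

/-- `L_n`, the words of length `n` in the language of `Σ_M`. -/
def Lang (n : ℕ) : Set (Fin n → M.A) := {u | M.WordIn u M.SFT}

/-- `(x,u)` is a labeled finite trajectory: `(x_k, x_{k+1}) ∈ G(u_k)` for all `k`. -/
def Labeled {n : ℕ} (x : Fin (n + 1) → ℝ) (u : Fin n → M.A) : Prop :=
  ∀ i : Fin n, (x i.castSucc, x i.succ) ∈ M.Gr (u i)

/-- `(x,u)` is a special labeled finite trajectory: `(x_k, x_{k+1}) ∈ G₀(u_k)` for all `k`. -/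
def SpecialLabeled {n : ℕ} (x : Fin (n + 1) → ℝ) (u : Fin n → M.A) : Prop :=
  ∀ i : Fin n, (x i.castSucc, x i.succ) ∈ M.G0 (u i)

/-- A word `u ∈ L_n` is essential if the set of finite trajectories specially labeled
by `u` is open in `X_{n+1}`. -/
def EssentialWord {n : ℕ} (u : Fin n → M.A) : Prop :=
  u ∈ M.Lang n ∧ IsOpen {x : M.finTraj (n + 1) | M.SpecialLabeled x.1 u}

/-- A symbol is essential if it appears in some essential word. -/
def EssentialSymbol (a : M.A) : Prop :=
  ∃ n : ℕ, ∃ u : Fin n → M.A, M.EssentialWord u ∧ ∃ i : Fin n, u i = a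

/-- `A^(e)`, the set of essential symbols. -/
def Ess : Set M.A := {a | M.EssentialSymbol a}

/-- `E`, the set of essential symbolic sequences. -/
def E : Set (ℕ → M.A) := {z ∈ M.SFT | ∀ i : ℕ, z i ∈ M.Ess}

/-- A word all of whose letters lie in `C`, in the language of `Σ_M`. -/
def WordOver {n : ℕ} (u : Fin n → M.A) (C : Set M.A) : Prop :=
  u ∈ M.Lang n ∧ ∀ i, u i ∈ C

/-- There is a word of length `n+1` over `C` beginning with `a` and ending with `b`. -/
def WordFromTo (C : Set M.A) (a b : M.A) (n : ℕ) : Prop :=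
  ∃ u : Fin (n + 1) → M.A, M.WordOver u C ∧ u 0 = a ∧ u (Fin.last n) = b

/-- `C ⊆ A` is irreducible. -/
def IrreducibleSet (C : Set M.A) : Prop :=
  ∀ a ∈ C, ∀ b ∈ C, ∃ n : ℕ, M.WordFromTo C a b n

/-- `C` is an irreducible component (a maximal irreducible subset of `A`). -/
def IrreducibleComponent (C : Set M.A) : Prop :=
  M.IrreducibleSet C ∧ ∀ C' : Set M.A, M.IrreducibleSet C' → C ⊆ C' → C' = C

/-- `C ⊆ A` is mixing. -/
def MixingSet (C : Set M.A) : Prop :=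
  ∃ N : ℕ, 1 ≤ N ∧ ∀ a ∈ C, ∀ b ∈ C, ∀ n : ℕ, N ≤ n + 1 → M.WordFromTo C a b n

/-- `C` is a mixing component (a maximal mixing subset of `A`). -/
def MixingComponent (C : Set M.A) : Prop :=
  M.MixingSet C ∧ ∀ C' : Set M.A, M.MixingSet C' → C ⊆ C' → C' = C

/-- The Irreducibility Condition (IC). -/
def IC : Prop := ∃ C : Set M.A, M.IrreducibleComponent C ∧ M.Ess ⊆ C

/-- The Mixing Condition (MC). -/
def MC : Prop := ∃ C : Set M.A, M.MixingComponent C ∧ M.Ess ⊆ C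

/-- `Z` is a subshift of `Σ_M`: shift-invariant and closed in the product of discrete
topologies (closedness phrased combinatorially). -/
def IsSubshift (Z : Set (ℕ → M.A)) : Prop :=
  Z ⊆ M.SFT ∧ (∀ z ∈ Z, (fun k => z (k + 1)) ∈ Z) ∧
  ∀ x : ℕ → M.A, (∀ n : ℕ, ∃ z ∈ Z, ∀ i, i < n → z i = x i) → x ∈ Z

/-- The symbol `a` occurs in some point of `Z`. -/
def SymbolInShift (Z : Set (ℕ → M.A)) (a : M.A) : Prop := ∃ z ∈ Z, ∃ k : ℕ, z k = a

/-- `Z` is transitive on symbols. -/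
def TransitiveOnSymbols (Z : Set (ℕ → M.A)) : Prop :=
  ∀ a b : M.A, M.SymbolInShift Z a → M.SymbolInShift Z b →
    ∃ z ∈ Z, ∃ m n : ℕ, z m = a ∧ z (m + n) = b

end MarkovMultiMap

/-- The composition `g_{u₀} ∘ ⋯ ∘ g_{u_n}` of inverse maps along a list of symbols. -/
def gWordList (M : MarkovMultiMap) : List M.A → ℝ → ℝ
  | [], x => x
  | a :: l, x => M.g a (gWordList M l x)

namespace MarkovMultiMap

/-- The inverse map `g_u` associated to a word `u = u₀⋯u_n`. -/
def gWord (M : MarkovMultiMap) {n : ℕ} (u : Fin (n + 1) → M.A) : ℝ → ℝ :=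
  gWordList M (List.ofFn u)

/-- The interval `I_u = g_u(R(u_n))`. -/
def Iword (M : MarkovMultiMap) {n : ℕ} (u : Fin (n + 1) → M.A) : Set ℝ :=
  M.gWord u '' M.R (u (Fin.last n))

/-- The Coding Condition (CC). -/
def CC (M : MarkovMultiMap) : Prop :=
  ∃ Z : Set (ℕ → M.A), M.IsSubshift Z ∧ M.TransitiveOnSymbols Z ∧
    (∀ y ∈ Set.Icc (0 : ℝ) 1, ∃ a ∈ Z, ∃ x ∈ M.X, x 0 = y ∧
      ∀ i : ℕ, (x i, x (i + 1)) ∈ M.Gr (a i)) ∧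
    (∀ ε : ℝ, 0 < ε → ∃ N : ℕ, ∀ n : ℕ, N ≤ n → ∀ u : Fin (n + 1) → M.A,
      M.WordIn u Z → intervalLen (M.Iword u) < ε)

/-- Uniform equicontinuity of the family `{g_u : u ∈ L(C)}`. -/
def UnifEquicontOn (M : MarkovMultiMap) (C : Set M.A) : Prop :=
  ∀ ε : ℝ, 0 < ε → ∃ δ : ℝ, 0 < δ ∧ ∀ n : ℕ, ∀ u : Fin (n + 1) → M.A, M.WordOver u C →
    ∀ x ∈ M.R (u (Fin.last n)), ∀ y ∈ M.R (u (Fin.last n)),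
      |x - y| < δ → |M.gWord u x - M.gWord u y| < ε

end MarkovMultiMap

/-!
Pick `i` with `v i ≠ u i`. Since the `G₀(a)` are disjoint, `(x i, x (i+1)) ∈ G(v i) \ G₀(v i)`,
so `v i ∉ A₂`. Either `v i ∈ A₀` and `x i` is an endpoint of `D(v i)`, hence in `P`, which
forces `u i ∈ A₁ ∪ A₂`, so that every point of `G₀(u i)` has first coordinate `x i`; or
`v i ∈ A₁` and `x (i+1)` is an endpoint of `R(v i)`, which forces `u i ∈ A₂`, so that every point
of `G₀(u i)` has second coordinate `x (i+1)`. Move that coordinate slightly into the open interval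
`D₀(v i)` (resp. `R₀(v i)`) and complete it to a trajectory labeled by `v`: backwards through the
inverse branches `g`, which are continuous, and forwards through the branches `f`. Forwards, each
later point of `x` is an endpoint of both `R(v k)` and `D(v (k+1))`, so the moved point stays in
the interior of the next domain. These trajectories converge to `x` and are not specially labeled
by `u`, against the openness required by essentiality of `u`.
-/

open Filter

theorem IsCompact.continuousOn_image_of_leftInvOn {α β : Type*} [TopologicalSpace α]
    [TopologicalSpace β] [T2Space β] {f : α → β} {s : Set α} (hs : IsCompact s)
    (hf : ContinuousOn f s) {finv : β → α} (hleft : LeftInvOn finv f s) :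
    ContinuousOn finv (f '' s) := by
  refine continuousOn_iff_isClosed.2 fun t ht => ⟨f '' (t ∩ s), ?_, ?_⟩
  · exact ((hs.inter_left ht).image_of_continuousOn (hf.mono inter_subset_right)).isClosed
  · rw [inter_eq_self_of_subset_left (image_mono inter_subset_right), hleft.image_inter']

theorem ContinuousOn.mem_Ioo_iff_of_bijOn {f : ℝ → ℝ} {c d α β : ℝ} (hcd : c ≤ d)
    (hf : ContinuousOn f (Icc c d)) (hbij : BijOn f (Icc c d) (Icc α β)) {z : ℝ}
    (hz : z ∈ Icc c d) : f z ∈ Ioo α β ↔ z ∈ Ioo c d := by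
  have hc : c ∈ Icc c d := left_mem_Icc.2 hcd
  have hd : d ∈ Icc c d := right_mem_Icc.2 hcd
  have hαβ : α ≤ β := (hbij.mapsTo hc).1.trans (hbij.mapsTo hc).2
  obtain ⟨wα, hwα, hfα⟩ := hbij.surjOn (left_mem_Icc.2 hαβ)
  obtain ⟨wβ, hwβ, hfβ⟩ := hbij.surjOn (right_mem_Icc.2 hαβ)
  rcases hf.strictMonoOn_of_injOn_Icc' hcd hbij.injOn with hmono | hanti
  · have hfc : f c = α := le_antisymm (hfα ▸ hmono.monotoneOn hc hwα hwα.1) (hbij.mapsTo hc).1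
    have hfd : f d = β := le_antisymm (hbij.mapsTo hd).2 (hfβ ▸ hmono.monotoneOn hwβ hd hwβ.2)
    rw [← hfc, ← hfd, mem_Ioo, mem_Ioo, hmono.lt_iff_lt hc hz, hmono.lt_iff_lt hz hd]
  · have hfc : f c = β := le_antisymm (hbij.mapsTo hc).2 (hfβ ▸ hanti.antitoneOn hc hwβ hwβ.1)
    have hfd : f d = α := le_antisymm (hfα ▸ hanti.antitoneOn hwα hd hwα.2) (hbij.mapsTo hd).1
    rw [← hfc, ← hfd, mem_Ioo, mem_Ioo, hanti.lt_iff_gt hd hz, hanti.lt_iff_gt hz hc, and_comm]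

theorem Ioo_mem_nhdsWithin_Ioo_of_notMem {c d α β x : ℝ} (hcd : c < d)
    (hsub : Ioo c d ⊆ Ioo α β) (hx : x ∈ Icc c d) (hxα : x ∉ Ioo α β) :
    Ioo c d ∈ 𝓝[Ioo α β] x := by
  obtain ⟨hαc, hdβ⟩ := (Ioo_subset_Ioo_iff hcd).1 hsub
  rcases le_or_gt x α with hxa | hxa
  · have hxc : x = c := le_antisymm (hxa.trans hαc) hx.1
    subst hxc
    exact mem_nhdsWithin.2 ⟨Iio d, isOpen_Iio, hcd, fun y hy => ⟨hxa.trans_lt hy.2.1, hy.1⟩⟩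
  · have hβx : β ≤ x := not_lt.1 fun h => hxα ⟨hxa, h⟩
    have hxd : x = d := le_antisymm hx.2 (hdβ.trans hβx)
    subst hxd
    exact mem_nhdsWithin.2 ⟨Ioi c, isOpen_Ioi, hcd, fun y hy => ⟨hy.1, hy.2.2.trans_le hβx⟩⟩

theorem Filter.Tendsto.eventually_of_isOpen_subtype {α β : Type*} [TopologicalSpace β]
    {l : Filter α} {T : Set β} {p : β → Prop} (hp : IsOpen {z : T | p z}) {x : β} (hxT : x ∈ T)
    (hx : p x) {Y : α → β} (hY : Tendsto Y l (𝓝 x)) (hYT : ∀ᶠ t in l, Y t ∈ T) :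
    ∀ᶠ t in l, p (Y t) := by
  obtain ⟨u, hu, hsub⟩ := (mem_nhds_subtype T ⟨x, hxT⟩ _).1 (hp.mem_nhds hx)
  filter_upwards [hY hu, hYT] with t htu htT
  exact hsub (show (⟨Y t, htT⟩ : T) ∈ Subtype.val ⁻¹' u from htu)

theorem Fin.clamp_val {m : ℕ} (i : Fin (m + 1)) : Fin.clamp i m = i :=
  Fin.ext (by simp [i.is_le])

theorem forall_clamp_mem_of_forall_fin {ι β : Type*} {m : ℕ} {S : ι → Set (β × β)}
    {y : Fin (m + 2) → β} {w : Fin (m + 1) → ι}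
    (h : ∀ i : Fin (m + 1), (y i.castSucc, y i.succ) ∈ S (w i)) :
    ∀ k ≤ m, (y (Fin.clamp k (m + 1)), y (Fin.clamp (k + 1) (m + 1))) ∈ S (w (Fin.clamp k m)) := by
  intro k hk
  have hc : Fin.clamp k (m + 1) = (Fin.clamp k m).castSucc := Fin.ext (by simp; omega)
  have hs : Fin.clamp (k + 1) (m + 1) = (Fin.clamp k m).succ := Fin.ext (by simp)
  rw [hc, hs]
  exact h _

namespace MarkovMultiMap

variable {M : MarkovMultiMap} {a a' : M.A}

theorem exists_D_eq_Icc (ha : a ∈ M.A0) :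
    ∃ c ∈ M.P, ∃ d ∈ M.P, c < d ∧ (∀ r ∈ M.P, ¬(c < r ∧ r < d)) ∧
      M.D a = Icc c d ∧ M.D0 a = Ioo c d := by
  obtain ⟨c, hc, d, hd, hcd, hP, hD⟩ := M.D_A0 a ha
  exact ⟨c, hc, d, hd, hcd, hP, hD, by rw [M.D0_A0 a ha, hD, interior_Icc]⟩

theorem exists_R_eq_Icc (ha : a ∈ M.A0 ∪ M.A1) :
    ∃ α ∈ M.P, ∃ β ∈ M.P, α < β ∧ M.R a = Icc α β ∧ M.R0 a = Ioo α β := by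
  obtain ⟨α, hα, β, hβ, hαβ, hR⟩ : ∃ α ∈ M.P, ∃ β ∈ M.P, α < β ∧ M.R a = Icc α β := by
    rcases ha with ha | ha
    · exact M.R_A0 a ha
    · obtain ⟨α, hα, β, hβ, hαβ, hR, -⟩ := M.R_A1 a ha
      exact ⟨α, hα, β, hβ, hαβ, hR⟩
  exact ⟨α, hα, β, hβ, hαβ, hR, by rw [M.R0_A01 a ha, hR, interior_Icc]⟩

theorem mem_A1_union_A2 (ha : a ∉ M.A0) : a ∈ M.A1 ∪ M.A2 :=
  (M.A_cover a).resolve_left ha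

theorem mem_A0_union_A1 (ha : a ∉ M.A2) : a ∈ M.A0 ∪ M.A1 :=
  (M.A_cover a).imp_right (Or.resolve_right · ha)

theorem D0_eq_D (ha : a ∉ M.A0) : M.D0 a = M.D a :=
  M.D0_A12 a (mem_A1_union_A2 ha)

theorem D_subsingleton (ha : a ∉ M.A0) : (M.D a).Subsingleton := by
  obtain ⟨p, -, hD⟩ := M.D_A12 a (mem_A1_union_A2 ha)
  rw [hD]
  exact subsingleton_singleton

theorem D0_subset_D : M.D0 a ⊆ M.D a := by
  by_cases ha : a ∈ M.A0
  · obtain ⟨c, -, d, -, -, -, hD, hD0⟩ := exists_D_eq_Icc ha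
    rw [hD, hD0]
    exact Ioo_subset_Icc_self
  · rw [D0_eq_D ha]

theorem R0_subset_R : M.R0 a ⊆ M.R a := by
  rcases M.A_cover a with ha | ha | ha
  · rw [M.R0_A01 a (Or.inl ha)]; exact interior_subset
  · rw [M.R0_A01 a (Or.inr ha)]; exact interior_subset
  · rw [M.R0_A2 a ha]

theorem D_subset_Icc : M.D a ⊆ Icc 0 1 := by
  rw [M.cover]
  exact subset_iUnion M.D a

theorem R_subset_Icc : M.R a ⊆ Icc 0 1 := by
  by_cases ha : a ∈ M.A2
  · obtain ⟨ρ, hρ, hR⟩ := M.R_A2 a ha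
    rw [hR, singleton_subset_iff]
    exact M.P_sub hρ
  · obtain ⟨α, hα, β, hβ, -, hR, -⟩ :=
      exists_R_eq_Icc (mem_A0_union_A1 ha)
    rw [hR]
    exact Icc_subset_Icc (M.P_sub hα).1 (M.P_sub hβ).2

theorem Gr_subset : M.Gr a ⊆ M.D a ×ˢ M.R a := by
  by_cases ha : a ∈ M.A0
  · rw [M.Gr_A0 a ha]
    rintro ⟨p, q⟩ ⟨hp, hq⟩
    exact ⟨hp, hq ▸ (M.f_homeo a ha).2.mapsTo hp⟩
  · rw [M.Gr_A12 a (mem_A1_union_A2 ha)]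

theorem mem_P_of_mem_D_of_notMem_D0 {p : ℝ} (hp : p ∈ M.D a) (hp0 : p ∉ M.D0 a) : p ∈ M.P := by
  by_cases ha : a ∈ M.A0
  · obtain ⟨c, hc, d, hd, -, -, hD, hD0⟩ := exists_D_eq_Icc ha
    rw [hD] at hp
    rw [hD0] at hp0
    rcases eq_endpoints_or_mem_Ioo_of_mem_Icc hp with rfl | rfl | h
    exacts [hc, hd, absurd h hp0]
  · exact absurd (D0_eq_D ha ▸ hp) hp0

theorem mem_P_of_mem_R_of_notMem_R0 {q : ℝ} (hq : q ∈ M.R a) (hq0 : q ∉ M.R0 a) : q ∈ M.P := by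
  by_cases ha : a ∈ M.A2
  · exact absurd (M.R0_A2 a ha ▸ hq) hq0
  · obtain ⟨α, hα, β, hβ, -, hR, hR0⟩ :=
      exists_R_eq_Icc (mem_A0_union_A1 ha)
    rw [hR] at hq
    rw [hR0] at hq0
    rcases eq_endpoints_or_mem_Ioo_of_mem_Icc hq with rfl | rfl | h
    exacts [hα, hβ, absurd h hq0]

theorem notMem_D0_of_mem_P (ha : a ∈ M.A0) {r : ℝ} (hr : r ∈ M.P) : r ∉ M.D0 a := by
  obtain ⟨c, -, d, -, -, hP, -, hD0⟩ := exists_D_eq_Icc ha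
  rw [hD0]
  exact hP r hr

theorem notMem_R0_of_mem_P (ha : a ∈ M.A1) {r : ℝ} (hr : r ∈ M.P) : r ∉ M.R0 a := by
  obtain ⟨α, -, β, -, -, hR, hRP⟩ := M.R_A1 a ha
  rw [M.R0_A01 a (Or.inr ha), hR, interior_Icc]
  intro h
  have : r ∈ ({α, β} : Set ℝ) := hRP ▸ ⟨Ioo_subset_Icc_self h, hr⟩
  rcases this with rfl | rfl
  exacts [h.1.ne rfl, h.2.ne rfl]


theorem f_mem_R0_iff (ha : a ∈ M.A0) {p : ℝ} (hp : p ∈ M.D a) :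
    M.f a p ∈ M.R0 a ↔ p ∈ M.D0 a := by
  obtain ⟨c, -, d, -, hcd, -, hD, hD0⟩ := exists_D_eq_Icc ha
  obtain ⟨α, -, β, -, -, hR, hR0⟩ := exists_R_eq_Icc (Or.inl ha)
  obtain ⟨hcont, hbij⟩ := M.f_homeo a ha
  rw [hD] at hcont hbij hp
  rw [hR] at hbij
  rw [hR0, hD0]
  exact hcont.mem_Ioo_iff_of_bijOn hcd.le hbij hp

theorem g_mem_D0 {q : ℝ} (hq : q ∈ M.R0 a) : M.g a q ∈ M.D0 a := by
  by_cases ha : a ∈ M.A0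
  · obtain ⟨hgD, hfg⟩ := (M.g_A0 a ha).2 q (R0_subset_R hq)
    rwa [← f_mem_R0_iff ha hgD, hfg]
  · rw [D0_eq_D ha]
    exact M.g_A12 a (mem_A1_union_A2 ha) q (R0_subset_R hq)

theorem continuousOn_g (ha : a ∈ M.A0) : ContinuousOn (M.g a) (M.R a) := by
  obtain ⟨c, -, d, -, -, -, hD, -⟩ := exists_D_eq_Icc ha
  rw [← (M.f_homeo a ha).2.image_eq]
  refine IsCompact.continuousOn_image_of_leftInvOn ?_ (M.f_homeo a ha).1 (M.g_A0 a ha).1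
  rw [hD]
  exact isCompact_Icc

theorem mem_Gr_iff (ha : a ∈ M.A0) {p q : ℝ} : (p, q) ∈ M.Gr a ↔ p ∈ M.D a ∧ q = M.f a p := by
  rw [M.Gr_A0 a ha]
  rfl

theorem mk_f_mem_Gr (ha : a ∈ M.A0) {p : ℝ} (hp : p ∈ M.D a) : (p, M.f a p) ∈ M.Gr a :=
  (mem_Gr_iff ha).2 ⟨hp, rfl⟩

theorem g_mk_mem_Gr {q : ℝ} (hq : q ∈ M.R a) : (M.g a q, q) ∈ M.Gr a := by
  by_cases ha : a ∈ M.A0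
  · obtain ⟨hgD, hfg⟩ := (M.g_A0 a ha).2 q hq
    exact (mem_Gr_iff ha).2 ⟨hgD, hfg.symm⟩
  · rw [M.Gr_A12 a (mem_A1_union_A2 ha)]
    exact ⟨M.g_A12 a (mem_A1_union_A2 ha) q hq, hq⟩

theorem tendsto_f (ha : a ∈ M.A0) {p q : ℝ} (h : (p, q) ∈ M.Gr a) :
    Tendsto (M.f a) (𝓝[M.D0 a] p) (𝓝[M.R0 a] q) := by
  obtain ⟨hp, rfl⟩ := (mem_Gr_iff ha).1 h
  exact (((M.f_homeo a ha).1 p hp).mono D0_subset_D).tendsto_nhdsWithin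
    fun z hz => (f_mem_R0_iff ha (D0_subset_D hz)).2 hz

theorem tendsto_g {p q : ℝ} (h : (p, q) ∈ M.Gr a) :
    Tendsto (M.g a) (𝓝[M.R0 a] q) (𝓝[M.D0 a] p) := by
  obtain ⟨hp, hq⟩ : p ∈ M.D a ∧ q ∈ M.R a := Gr_subset h
  by_cases ha : a ∈ M.A0
  · have hgq : M.g a q = p := ((mem_Gr_iff ha).1 h).2 ▸ (M.g_A0 a ha).1 p hp
    exact hgq ▸ ((continuousOn_g ha q hq).mono R0_subset_R).tendsto_nhdsWithin fun z => g_mem_D0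
  · have hgp : ∀ z ∈ M.R0 a, M.g a z = p := fun z hz =>
      D_subsingleton ha (M.g_A12 a (mem_A1_union_A2 ha) z (R0_subset_R hz)) hp
    refine Tendsto.congr' (eventually_nhdsWithin_of_forall fun z hz => (hgp z hz).symm) ?_
    exact tendsto_nhdsWithin_iff.2
      ⟨tendsto_const_nhds, Eventually.of_forall fun _ => D0_eq_D ha ▸ hp⟩

theorem mem_A0_and_D0_mem_nhdsWithin {q : ℝ} (hsub : M.D0 a' ⊆ M.R0 a) (hq : q ∈ M.D a')
    (hq0 : q ∉ M.R0 a) : a' ∈ M.A0 ∧ M.D0 a' ∈ 𝓝[M.R0 a] q := by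
  have ha' : a' ∈ M.A0 := by
    by_contra ha'
    exact hq0 (hsub (D0_eq_D ha' ▸ hq))
  obtain ⟨c, -, d, -, hcd, -, hD, hD0⟩ := exists_D_eq_Icc ha'
  refine ⟨ha', ?_⟩
  by_cases ha : a ∈ M.A2
  · obtain ⟨ρ, -, hR⟩ := M.R_A2 a ha
    rw [hD0, M.R0_A2 a ha, hR] at hsub
    exact absurd (finite_singleton ρ) ((Ioo_infinite hcd).mono hsub)
  · obtain ⟨α, -, β, -, -, -, hR0⟩ :=
      exists_R_eq_Icc (mem_A0_union_A1 ha)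
    rw [hD0, hR0] at hsub ⊢
    rw [hR0] at hq0
    exact Ioo_mem_nhdsWithin_Ioo_of_notMem hcd hsub (hD ▸ hq) hq0

theorem nhdsWithin_D0_neBot (ha : a ∈ M.A0) {p : ℝ} (hp : p ∈ M.D a) : (𝓝[M.D0 a] p).NeBot := by
  obtain ⟨c, -, d, -, hcd, -, hD, hD0⟩ := exists_D_eq_Icc ha
  rw [hD0, ← mem_closure_iff_nhdsWithin_neBot, closure_Ioo hcd.ne, ← hD]
  exact hp

theorem nhdsWithin_R0_neBot (ha : a ∈ M.A0 ∪ M.A1) {q : ℝ} (hq : q ∈ M.R a) :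
    (𝓝[M.R0 a] q).NeBot := by
  obtain ⟨α, -, β, -, hαβ, hR, hR0⟩ := exists_R_eq_Icc ha
  rw [hR0, ← mem_closure_iff_nhdsWithin_neBot, closure_Ioo hαβ.ne, ← hR]
  exact hq


theorem G0_subset : M.G0 a ⊆ M.D0 a ×ˢ M.R0 a := by
  rcases M.A_cover a with ha | ha | ha
  · rw [M.G0_A0 a ha]
    rintro ⟨p, q⟩ ⟨hp, hq⟩
    exact ⟨hp, hq ▸ (f_mem_R0_iff ha (D0_subset_D hp)).2 hp⟩
  · rw [M.G0_A1 a ha, M.D0_A12 a (Or.inl ha)]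
  · rw [M.G0_A2 a ha, M.Gr_A12 a (Or.inr ha), M.D0_A12 a (Or.inr ha), M.R0_A2 a ha]

theorem R0_subsingleton (ha : a ∈ M.A2) : (M.R0 a).Subsingleton := by
  obtain ⟨ρ, -, hR⟩ := M.R_A2 a ha
  rw [M.R0_A2 a ha, hR]
  exact subsingleton_singleton

theorem D0_subset_R0_of_mem_Lang {m : ℕ} {w : Fin (m + 1) → M.A} (hw : w ∈ M.Lang (m + 1)) :
    ∀ k < m, M.D0 (w (Fin.clamp (k + 1) m)) ⊆ M.R0 (w (Fin.clamp k m)) := by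
  obtain ⟨z, hz, m', hzw⟩ := hw
  intro k hk
  rw [hzw, hzw, Fin.coe_clamp, Fin.coe_clamp, min_eq_left hk, min_eq_left hk.le]
  exact hz (m' + k)

theorem mem_finTraj_of_forall_mem_Gr {m : ℕ} {y : ℕ → ℝ} {w : ℕ → M.A}
    (h : ∀ k ≤ m, (y k, y (k + 1)) ∈ M.Gr (w k)) :
    (fun k : Fin (m + 2) => y k) ∈ M.finTraj (m + 2) := by
  refine ⟨fun k => ?_, fun k hk => mem_iUnion.2 ⟨w k, h k (by omega)⟩⟩
  by_cases hkm : (k : ℕ) ≤ m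
  · exact D_subset_Icc (Gr_subset (h k hkm)).1
  · obtain hk : (k : ℕ) = m + 1 := by omega
    simpa [hk] using R_subset_Icc (Gr_subset (h m le_rfl)).2

section Trajectories

variable {α : Type*} {l : Filter α} {b : ℕ → M.A} {x : ℕ → ℝ}

theorem exists_backward_trajectory {j : ℕ} (hx : ∀ k < j, (x k, x (k + 1)) ∈ M.Gr (b k))
    (hb : ∀ k, k + 1 < j → M.D0 (b (k + 1)) ⊆ M.R0 (b k)) {φ : α → ℝ}
    (hφ : Tendsto φ l (𝓝 (x j))) (hφR : 0 < j → ∀ᶠ t in l, φ t ∈ M.R0 (b (j - 1))) :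
    ∃ Y : α → ℕ → ℝ, (∀ t, Y t j = φ t) ∧ (∀ k ≤ j, Tendsto (Y · k) l (𝓝 (x k))) ∧
      ∀ᶠ t in l, ∀ k < j, (Y t k, Y t (k + 1)) ∈ M.Gr (b k) := by
  induction j generalizing φ with
  | zero =>
    refine ⟨fun t _ => φ t, fun _ => rfl, fun k hk => ?_, by simp⟩
    obtain rfl : k = 0 := by omega
    exact hφ
  | succ j ih =>
    have hφR' := hφR j.succ_pos
    have hψ : Tendsto (M.g (b j) ∘ φ) l (𝓝[M.D0 (b j)] (x j)) :=
      (tendsto_g (hx j j.lt_succ_self)).comp (tendsto_nhdsWithin_iff.2 ⟨hφ, hφR'⟩)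
    obtain ⟨Y, hYj, hYx, hYGr⟩ := ih (fun k hk => hx k (by omega)) (fun k hk => hb k (by omega))
      (tendsto_nhdsWithin_iff.1 hψ).1 fun hj =>
        (tendsto_nhdsWithin_iff.1 hψ).2.mono fun t ht =>
          hb (j - 1) (by omega) (by rwa [Nat.sub_add_cancel hj])
    refine ⟨fun t => Function.update (Y t) (j + 1) (φ t), fun t => by simp, fun k hk => ?_, ?_⟩
    · rcases Nat.lt_or_eq_of_le hk with hk | rfl
      · simpa [Function.update_of_ne (show k ≠ j + 1 by omega)] using hYx k (by omega)
      · simpa using hφ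
    · filter_upwards [hYGr, hφR'] with t hY hφt k hk
      rcases Nat.lt_or_eq_of_le (Nat.le_of_lt_succ hk) with hk | rfl
      · simpa [Function.update_of_ne (show k ≠ j + 1 by omega),
          Function.update_of_ne (show k + 1 ≠ j + 1 by omega)] using hY k hk
      · simpa [Function.update_of_ne (show k ≠ k + 1 by omega), hYj] using
          g_mk_mem_Gr (R0_subset_R hφt)

theorem exists_forward_trajectory {n j : ℕ}
    (hx : ∀ k, j ≤ k → k ≤ n → (x k, x (k + 1)) ∈ M.Gr (b k))
    (hb : ∀ k, j ≤ k → k < n → M.D0 (b (k + 1)) ⊆ M.R0 (b k))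
    (hbd : j ≤ n → b j ∈ M.A0 ∧ x j ∉ M.D0 (b j)) {φ : α → ℝ}
    (hφ : Tendsto φ l (𝓝 (x j))) (hφD : j ≤ n → ∀ᶠ t in l, φ t ∈ M.D0 (b j)) :
    ∃ Y : α → ℕ → ℝ, (∀ t, Y t j = φ t) ∧
      (∀ k, j ≤ k → k ≤ n + 1 → Tendsto (Y · k) l (𝓝 (x k))) ∧
      ∀ᶠ t in l, ∀ k, j ≤ k → k ≤ n → (Y t k, Y t (k + 1)) ∈ M.Gr (b k) := by
  induction h : n + 1 - j generalizing j φ with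
  | zero =>
    refine ⟨fun t _ => φ t, fun _ => rfl, fun k hjk hk => ?_, ?_⟩
    · obtain rfl : k = j := by omega
      exact hφ
    · exact Eventually.of_forall fun t k hjk hk => absurd h (by omega)
  | succ m ih =>
    have hj : j ≤ n := by omega
    obtain ⟨hbj, hxj⟩ := hbd hj
    have hψ : Tendsto (M.f (b j) ∘ φ) l (𝓝[M.R0 (b j)] (x (j + 1))) :=
      (tendsto_f hbj (hx j le_rfl hj)).comp (tendsto_nhdsWithin_iff.2 ⟨hφ, hφD hj⟩)
    have hxj' : x (j + 1) ∉ M.R0 (b j) := by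
      rw [((mem_Gr_iff hbj).1 (hx j le_rfl hj)).2,
        f_mem_R0_iff hbj ((mem_Gr_iff hbj).1 (hx j le_rfl hj)).1]
      exact hxj
    have hnext : j + 1 ≤ n → b (j + 1) ∈ M.A0 ∧ M.D0 (b (j + 1)) ∈ 𝓝[M.R0 (b j)] (x (j + 1)) :=
      fun hj1 => mem_A0_and_D0_mem_nhdsWithin (hb j le_rfl hj1)
        (Gr_subset (hx (j + 1) j.le_succ hj1)).1 hxj'
    obtain ⟨Y, hYj, hYx, hYGr⟩ := ih (fun k hk => hx k (by omega)) (fun k hk => hb k (by omega))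
      (fun hj1 => ⟨(hnext hj1).1, fun h => hxj' (hb j le_rfl hj1 h)⟩)
      (tendsto_nhdsWithin_iff.1 hψ).1 (fun hj1 => hψ (hnext hj1).2) (by omega)
    refine ⟨fun t => Function.update (Y t) j (φ t), fun t => by simp, fun k hjk hk => ?_, ?_⟩
    · rcases Nat.lt_or_eq_of_le hjk with hjk | rfl
      · simpa [Function.update_of_ne (show k ≠ j by omega)] using hYx k hjk hk
      · simpa using hφ
    · filter_upwards [hYGr, hφD hj] with t hY hφt k hjk hk
      rcases Nat.lt_or_eq_of_le hjk with hjk | rfl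
      · simpa [Function.update_of_ne (show k ≠ j by omega),
          Function.update_of_ne (show k + 1 ≠ j by omega)] using hY k hjk hk
      · simpa [hYj] using mk_f_mem_Gr hbj (D0_subset_D hφt)

theorem exists_trajectory_through {n j : ℕ} (hx : ∀ k ≤ n, (x k, x (k + 1)) ∈ M.Gr (b k))
    (hb : ∀ k < n, M.D0 (b (k + 1)) ⊆ M.R0 (b k)) (hj : j ≤ n + 1)
    (hbd : j ≤ n → b j ∈ M.A0 ∧ x j ∉ M.D0 (b j)) {φ : α → ℝ} (hφ : Tendsto φ l (𝓝 (x j)))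
    (hφR : 0 < j → ∀ᶠ t in l, φ t ∈ M.R0 (b (j - 1)))
    (hφD : j ≤ n → ∀ᶠ t in l, φ t ∈ M.D0 (b j)) :
    ∃ Y : α → ℕ → ℝ, (∀ t, Y t j = φ t) ∧ (∀ k ≤ n + 1, Tendsto (Y · k) l (𝓝 (x k))) ∧
      ∀ᶠ t in l, ∀ k ≤ n, (Y t k, Y t (k + 1)) ∈ M.Gr (b k) := by
  obtain ⟨Yb, hYbj, hYbx, hYbGr⟩ := exists_backward_trajectory (fun k hk => hx k (by omega))
    (fun k hk => hb k (by omega)) hφ hφR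
  obtain ⟨Yf, hYfj, hYfx, hYfGr⟩ := exists_forward_trajectory (fun k _ hk => hx k hk)
    (fun k _ hk => hb k hk) hbd hφ hφD
  refine ⟨fun t k => if k ≤ j then Yb t k else Yf t k, fun t => by simp [hYbj], fun k hk => ?_, ?_⟩
  · by_cases hkj : k ≤ j
    · simpa [hkj] using hYbx k hkj
    · simpa [hkj] using hYfx k (by omega) hk
  · filter_upwards [hYbGr, hYfGr] with t hYb hYf k hk
    by_cases hkj : k < j
    · simpa [hkj.le, Nat.succ_le_of_lt hkj] using hYb k hkj
    · by_cases hkj' : k = j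
      · subst hkj'
        simpa [hYbj, ← hYfj] using hYf k le_rfl hk
      · simpa [show ¬k ≤ j by omega, show ¬k + 1 ≤ j by omega] using hYf k (by omega) hk

theorem exists_perturbation_of_mem_A0 {n i : ℕ} (hx : ∀ k ≤ n, (x k, x (k + 1)) ∈ M.Gr (b k))
    (hb : ∀ k < n, M.D0 (b (k + 1)) ⊆ M.R0 (b k)) (hi : i ≤ n) (h0 : b i ∈ M.A0)
    (hxi : x i ∉ M.D0 (b i)) :
    ∃ Y : ℝ → ℕ → ℝ, (∀ k ≤ n + 1, Tendsto (Y · k) (𝓝[M.D0 (b i)] (x i)) (𝓝 (x k))) ∧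
      ∀ᶠ t in 𝓝[M.D0 (b i)] (x i), (∀ k ≤ n, (Y t k, Y t (k + 1)) ∈ M.Gr (b k)) ∧ Y t i ≠ x i := by
  have hid := tendsto_nhdsWithin_iff.1 (tendsto_id (x := 𝓝[M.D0 (b i)] (x i)))
  obtain ⟨Y, hYi, hYx, hYGr⟩ := exists_trajectory_through hx hb (by omega) (fun _ => ⟨h0, hxi⟩)
    hid.1 (fun hi0 => hid.2.mono fun t ht => hb (i - 1) (by omega) (by
      rwa [Nat.sub_add_cancel hi0])) (fun _ => hid.2)
  refine ⟨Y, hYx, ?_⟩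
  filter_upwards [hYGr, hid.2] with t hY ht
  exact ⟨hY, fun h => hxi (by rw [← h, hYi]; exact ht)⟩

theorem exists_perturbation_of_mem_A1 {n i : ℕ} (hx : ∀ k ≤ n, (x k, x (k + 1)) ∈ M.Gr (b k))
    (hb : ∀ k < n, M.D0 (b (k + 1)) ⊆ M.R0 (b k)) (hi : i ≤ n) (hxi : x (i + 1) ∉ M.R0 (b i)) :
    ∃ Y : ℝ → ℕ → ℝ, (∀ k ≤ n + 1, Tendsto (Y · k) (𝓝[M.R0 (b i)] (x (i + 1))) (𝓝 (x k))) ∧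
      ∀ᶠ t in 𝓝[M.R0 (b i)] (x (i + 1)),
        (∀ k ≤ n, (Y t k, Y t (k + 1)) ∈ M.Gr (b k)) ∧ Y t (i + 1) ≠ x (i + 1) := by
  have hid := tendsto_nhdsWithin_iff.1 (tendsto_id (x := 𝓝[M.R0 (b i)] (x (i + 1))))
  have hnext : i + 1 ≤ n → b (i + 1) ∈ M.A0 ∧ M.D0 (b (i + 1)) ∈ 𝓝[M.R0 (b i)] (x (i + 1)) :=
    fun hi1 => mem_A0_and_D0_mem_nhdsWithin (hb i hi1) (Gr_subset (hx (i + 1) hi1)).1 hxi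
  obtain ⟨Y, hYi, hYx, hYGr⟩ := exists_trajectory_through hx hb (by omega)
    (fun hi1 => ⟨(hnext hi1).1, fun h => hxi (hb i hi1 h)⟩) hid.1 (fun _ => hid.2)
    (fun hi1 => (hnext hi1).2)
  refine ⟨Y, hYx, ?_⟩
  filter_upwards [hYGr, hid.2] with t hY ht
  exact ⟨hY, fun h => hxi (by rw [← h, hYi]; exact ht)⟩

theorem exists_perturbation (hpp : M.ProperlyParametrized) {n i : ℕ}
    (hx : ∀ k ≤ n, (x k, x (k + 1)) ∈ M.Gr (b k)) (hb : ∀ k < n, M.D0 (b (k + 1)) ⊆ M.R0 (b k))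
    (hi : i ≤ n) (ha : (x i, x (i + 1)) ∈ M.G0 a) (hba : b i ≠ a) :
    ∃ l : Filter ℝ, l.NeBot ∧ ∃ Y : ℝ → ℕ → ℝ,
      (∀ k ≤ n + 1, Tendsto (Y · k) l (𝓝 (x k))) ∧
      ∀ᶠ t in l, (∀ k ≤ n, (Y t k, Y t (k + 1)) ∈ M.Gr (b k)) ∧ (Y t i, Y t (i + 1)) ∉ M.G0 a := by
  have hbi : (x i, x (i + 1)) ∉ M.G0 (b i) := fun h => (hpp.2 _ _ hba).notMem_of_mem_right ha h
  obtain ⟨hxiD0, hxiR0⟩ : x i ∈ M.D0 a ∧ x (i + 1) ∈ M.R0 a := G0_subset ha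
  obtain ⟨hxiD, hxiR⟩ : x i ∈ M.D (b i) ∧ x (i + 1) ∈ M.R (b i) := Gr_subset (hx i hi)
  rcases M.A_cover (b i) with h0 | h1 | h2
  · have hxi : x i ∉ M.D0 (b i) := fun h =>
      hbi (by rw [M.G0_A0 _ h0]; exact ⟨h, ((mem_Gr_iff h0).1 (hx i hi)).2⟩)
    have ha0 : a ∉ M.A0 := fun ha0 =>
      notMem_D0_of_mem_P ha0 (mem_P_of_mem_D_of_notMem_D0 hxiD hxi) hxiD0
    obtain ⟨Y, hYx, hY⟩ := exists_perturbation_of_mem_A0 hx hb hi h0 hxi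
    refine ⟨_, nhdsWithin_D0_neBot h0 hxiD, Y, hYx, hY.mono fun t ht => ⟨ht.1, fun hG0 => ht.2 ?_⟩⟩
    exact D_subsingleton ha0 (D0_subset_D (G0_subset hG0).1) (D0_subset_D hxiD0)
  · have hxi : x (i + 1) ∉ M.R0 (b i) := fun h =>
      hbi (by rw [M.G0_A1 _ h1]; exact ⟨hxiD, h⟩)
    have hxiP : x i ∈ M.P := by
      obtain ⟨p, hp, hD⟩ := M.D_A12 _ (Or.inl h1)
      rw [hD] at hxiD
      exact hxiD ▸ hp
    have ha2 : a ∈ M.A2 := by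
      rcases M.A_cover a with ha0 | ha1 | ha2
      · exact absurd hxiD0 (notMem_D0_of_mem_P ha0 hxiP)
      · exact absurd hxiR0 (notMem_R0_of_mem_P ha1 (mem_P_of_mem_R_of_notMem_R0 hxiR hxi))
      · exact ha2
    obtain ⟨Y, hYx, hY⟩ := exists_perturbation_of_mem_A1 hx hb hi hxi
    refine ⟨_, nhdsWithin_R0_neBot (Or.inr h1) hxiR, Y, hYx,
      hY.mono fun t ht => ⟨ht.1, fun hG0 => ht.2 ?_⟩⟩
    exact R0_subsingleton ha2 (G0_subset hG0).2 hxiR0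
  · exact absurd (M.G0_A2 _ h2 ▸ hx i hi) hbi

end Trajectories

end MarkovMultiMap

/-- If `u ∈ L_{n+1}` is essential and `(x,u)` is a special labeled finite trajectory,
then no other word `v ∈ L_{n+1}` labels `x`. -/
theorem stmt8 (M : MarkovMultiMap) (hpp : M.ProperlyParametrized)
    (n : ℕ) (u : Fin (n + 1) → M.A) (hu : M.EssentialWord u)
    (x : Fin (n + 2) → ℝ) (hx : x ∈ M.finTraj (n + 2)) (hsp : M.SpecialLabeled x u) :
    ∀ v : Fin (n + 1) → M.A, v ∈ M.Lang (n + 1) → v ≠ u → ¬ M.Labeled x v := by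
  intro v hvL hvu hvx
  obtain ⟨i, hi⟩ := Function.ne_iff.1 hvu
  have hxi := forall_clamp_mem_of_forall_fin hsp i i.is_le
  rw [Fin.clamp_val] at hxi
  obtain ⟨l, hl, Y, hYx, hY⟩ := MarkovMultiMap.exists_perturbation hpp
    (forall_clamp_mem_of_forall_fin hvx) (MarkovMultiMap.D0_subset_R0_of_mem_Lang hvL) i.is_le hxi
    (by rwa [Fin.clamp_val])
  have hYx' : Tendsto (fun t (k : Fin (n + 2)) => Y t k) l (𝓝 x) :=
    tendsto_pi_nhds.2 fun k => by simpa [Fin.clamp_val] using hYx k k.is_le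
  have hYsp := hYx'.eventually_of_isOpen_subtype (p := (M.SpecialLabeled · u)) hu.2 hx hsp
    (hY.mono fun t ht => MarkovMultiMap.mem_finTraj_of_forall_mem_Gr ht.1)
  obtain ⟨t, hsp', -, hG0⟩ := (hYsp.and hY).exists
  exact hG0 (hsp' i)
end

section
/- Let F be a properly parametrized Markov multi-map with associated SFT Σ_M. If u∈L_n is an essential word, then for every m≥n there exists an essential word v∈L_m containing u (as a subword). -/
open Set Topology

/-!
Essential words are extended one letter at a time on the right; let `c` be the last letter.
If `R(c)` is a nondegenerate interval, append an `A₀`-letter `a` with `D₀(a) ⊆ R₀(c)`: away from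
`P` the pieces of `G(F)` are the closed graphs of the `A₀`-branches, and proper parametrization
makes `G₀(a)` relatively open in `G(F)`. If `R(c) = {w}`, append the `A₁`-letter based at `w` if
there is one; otherwise the fibre of `G(F)` over `w` is finite, so for the letter `d` following
`c` on any path, `G₀(d) = {(w, w')}` is an isolated point of that fibre. In each case the new
letter starts an infinite path, so the longer word stays in the language.
-/

namespace MarkovMultiMap

variable {M : MarkovMultiMap}

lemma exists_D0_eq_Ioo {a : M.A} (ha : a ∈ M.A0) :
    ∃ p ∈ M.P, ∃ q ∈ M.P, p < q ∧ (∀ r ∈ M.P, ¬(p < r ∧ r < q)) ∧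
      M.D a = Icc p q ∧ M.D0 a = Ioo p q := by
  obtain ⟨p, hp, q, hq, hpq, hgap, hD⟩ := M.D_A0 a ha
  exact ⟨p, hp, q, hq, hpq, hgap, hD, by rw [M.D0_A0 a ha, hD, interior_Icc]⟩

lemma exists_D_eq_D0_eq_singleton {a : M.A} (ha : a ∉ M.A0) : ∃ p ∈ M.P, M.D a = {p} ∧ M.D0 a = {p} := by
  have ha12 : a ∈ M.A1 ∪ M.A2 := (M.A_cover a).resolve_left ha
  obtain ⟨p, hp, hD⟩ := M.D_A12 a ha12
  exact ⟨p, hp, hD, by rw [M.D0_A12 a ha12, hD]⟩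

lemma G0_subset_Gr (a : M.A) : M.G0 a ⊆ M.Gr a := by
  rcases M.A_cover a with ha | ha | ha
  · rw [M.G0_A0 a ha, M.Gr_A0 a ha, M.D0_A0 a ha]
    exact fun q hq => ⟨interior_subset hq.1, hq.2⟩
  · rw [M.G0_A1 a ha, M.Gr_A12 a (Or.inl ha), M.R0_A01 a (Or.inr ha)]
    exact prod_mono subset_rfl interior_subset
  · rw [M.G0_A2 a ha]

lemma Gr_subset_D_prod_R (a : M.A) : M.Gr a ⊆ M.D a ×ˢ M.R a := by
  by_cases ha : a ∈ M.A0
  · rw [M.Gr_A0 a ha]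
    rintro p ⟨hx, hy⟩
    exact ⟨hx, hy ▸ (M.f_homeo a ha).2.mapsTo hx⟩
  · rw [M.Gr_A12 a ((M.A_cover a).resolve_left ha)]

lemma isClosed_Gr {a : M.A} (ha : a ∈ M.A0) : IsClosed (M.Gr a) := by
  obtain ⟨p, -, q, -, -, -, hD⟩ := M.D_A0 a ha
  have hGr : M.Gr a = (fun x => (x, M.f a x)) '' M.D a := by
    rw [M.Gr_A0 a ha]
    ext ⟨x, y⟩
    simp only [mem_ofPred_eq, mem_image, Prod.mk.injEq]
    constructor
    · rintro ⟨hx, rfl⟩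
      exact ⟨x, hx, rfl, rfl⟩
    · rintro ⟨x, hx, rfl, rfl⟩
      exact ⟨hx, rfl⟩
  rw [hGr]
  refine (IsCompact.image_of_continuousOn ?_ ?_).isClosed
  · rw [hD]
    exact isCompact_Icc
  · exact continuousOn_id.prodMk (M.f_homeo a ha).1

lemma notMem_P_of_mem_D0 {a : M.A} (ha : a ∈ M.A0) {t : ℝ} (ht : t ∈ M.D0 a) : t ∉ M.P := by
  obtain ⟨p, -, q, -, -, hgap, -, hD0⟩ := exists_D0_eq_Ioo ha
  rw [hD0] at ht
  exact fun htP => hgap t htP ht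

lemma mem_D0_of_mem_D {a : M.A} (ha : a ∈ M.A0) {t : ℝ} (ht : t ∈ M.D a) (htP : t ∉ M.P) :
    t ∈ M.D0 a := by
  obtain ⟨p, hp, q, hq, -, -, hD, hD0⟩ := exists_D0_eq_Ioo ha
  rw [hD] at ht
  rw [hD0]
  exact ⟨ht.1.lt_of_ne (by rintro rfl; exact htP hp), ht.2.lt_of_ne (by rintro rfl; exact htP hq)⟩

lemma exists_A0_mem_D0_of_notMem_P {t : ℝ} (ht : t ∈ Icc (0 : ℝ) 1) (htP : t ∉ M.P) :
    ∃ b ∈ M.A0, t ∈ M.D0 b := by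
  rw [M.cover, mem_iUnion] at ht
  obtain ⟨b, hb⟩ := ht
  by_cases hbA0 : b ∈ M.A0
  · exact ⟨b, hbA0, mem_D0_of_mem_D hbA0 hb htP⟩
  · obtain ⟨p, hp, hD, -⟩ := exists_D_eq_D0_eq_singleton hbA0
    rw [hD, mem_singleton_iff] at hb
    exact absurd (hb ▸ hp) htP

/-- The `A₀`-domain through a point `t ∈ (u, v) \ P` contains no point of `P` in its interior,
so it lies in `[u, v]`. -/
lemma exists_A0_D0_subset_Ioo {u v : ℝ} (hu : u ∈ M.P) (hv : v ∈ M.P) (huv : u < v) :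
    ∃ b ∈ M.A0, M.D0 b ⊆ Ioo u v := by
  obtain ⟨t, htuv, htP⟩ := (Set.Ioo_infinite huv).exists_notMem_finset M.P
  have ht01 : t ∈ Icc (0 : ℝ) 1 :=
    ⟨(M.P_sub hu).1.trans htuv.1.le, htuv.2.le.trans (M.P_sub hv).2⟩
  obtain ⟨b, hb, htb⟩ := exists_A0_mem_D0_of_notMem_P ht01 htP
  obtain ⟨p, -, q, -, -, hgap, -, hD0⟩ := exists_D0_eq_Ioo hb
  rw [hD0] at htb
  refine ⟨b, hb, hD0 ▸ Ioo_subset_Ioo ?_ ?_⟩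
  · by_contra! hup
    exact hgap u hu ⟨hup, htuv.1.trans htb.2⟩
  · by_contra! hqv
    exact hgap v hv ⟨htb.1.trans htuv.2, hqv⟩

lemma exists_A0_D0_subset_R0 {a : M.A} (ha : a ∈ M.A0 ∪ M.A1) :
    ∃ b ∈ M.A0, M.D0 b ⊆ M.R0 a := by
  obtain ⟨u, hu, v, hv, huv, hR⟩ : ∃ u ∈ M.P, ∃ v ∈ M.P, u < v ∧ M.R a = Icc u v := by
    rcases ha with ha | ha
    · exact M.R_A0 a ha
    · obtain ⟨u, hu, v, hv, huv, hR, -⟩ := M.R_A1 a ha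
      exact ⟨u, hu, v, hv, huv, hR⟩
  rw [M.R0_A01 a ha, hR, interior_Icc]
  exact exists_A0_D0_subset_Ioo hu hv huv

lemma exists_mem_SFT_of_A01 {a : M.A} (ha : a ∈ M.A0 ∪ M.A1) : ∃ z ∈ M.SFT, z 0 = a := by
  have hnext : ∀ b : {b // b ∈ M.A0 ∪ M.A1}, ∃ c : {c // c ∈ M.A0 ∪ M.A1},
      M.D0 c ⊆ M.R0 b := fun b => by
    obtain ⟨c, hc, hcb⟩ := exists_A0_D0_subset_R0 b.2
    exact ⟨⟨c, Or.inl hc⟩, hcb⟩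
  choose next hnext using hnext
  refine ⟨fun k => (next^[k] ⟨a, ha⟩).1, fun k => ?_, rfl⟩
  simp only [Function.iterate_succ_apply']
  exact hnext _

lemma splice_mem_SFT {y z : ℕ → M.A} (hy : y ∈ M.SFT) (hz : z ∈ M.SFT) {k : ℕ}
    (hyz : M.D0 (z 0) ⊆ M.R0 (y k)) :
    (fun i => if i ≤ k then y i else z (i - (k + 1))) ∈ M.SFT := by
  intro i
  rcases lt_trichotomy i k with hik | rfl | hki
  · simp only [if_pos hik.le, if_pos (Nat.succ_le_of_lt hik)]
    exact hy i
  · simp only [le_refl, if_true, if_neg (Nat.not_succ_le_self i), Nat.sub_self]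
    exact hyz
  · simp only [if_neg (Nat.not_le_of_lt hki), if_neg (by omega : ¬i + 1 ≤ k)]
    rw [show i + 1 - (k + 1) = i - (k + 1) + 1 by omega]
    exact hz _

lemma exists_mem_SFT_of_mem_Lang {n : ℕ} {v : Fin (n + 1) → M.A} (hv : v ∈ M.Lang (n + 1)) :
    ∃ z ∈ M.SFT, z 0 = v (Fin.last n) := by
  obtain ⟨z, hz, j, hzv⟩ := hv
  refine ⟨fun k => z (j + n + k), fun k => hz (j + n + k), ?_⟩
  rw [hzv]
  rfl

lemma snoc_mem_Lang {n : ℕ} {v : Fin (n + 1) → M.A} (hv : v ∈ M.Lang (n + 1)) {a : M.A}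
    (hva : M.D0 a ⊆ M.R0 (v (Fin.last n))) (ha : ∃ z ∈ M.SFT, z 0 = a) :
    (Fin.snoc v a : Fin (n + 2) → M.A) ∈ M.Lang (n + 2) := by
  obtain ⟨y, hy, j, hyv⟩ := hv
  obtain ⟨z, hz, rfl⟩ := ha
  have hyz : M.D0 (z 0) ⊆ M.R0 (y (j + n)) := by rwa [hyv] at hva
  refine ⟨_, splice_mem_SFT hy hz hyz, j, Fin.lastCases ?_ fun i => ?_⟩
  · simp [Nat.add_assoc]
  · have hi : j + i ≤ j + n := by have := i.is_le; omega
    simp [hi, hyv]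

lemma finite_fiber_GF {w : ℝ} (hw : ∀ b ∈ M.A1, M.D b ≠ {w}) :
    {y | (w, y) ∈ M.GF}.Finite := by
  have := M.finA
  refine (finite_iUnion (f := fun b => {y | (w, y) ∈ M.Gr b}) fun b => ?_).subset
    fun y hy => by simpa [GF] using hy
  rcases M.A_cover b with hb | hb | hb
  · refine (finite_singleton (M.f b w)).subset fun y hy => ?_
    rw [mem_ofPred_eq, M.Gr_A0 b hb] at hy
    exact hy.2
  · refine finite_empty.subset fun y hy => ?_
    obtain ⟨p, -, hD⟩ := M.D_A12 b (Or.inl hb)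
    rw [mem_ofPred_eq, M.Gr_A12 b (Or.inl hb), mem_prod, hD, mem_singleton_iff] at hy
    obtain ⟨hwp, -⟩ := hy
    exact hw b hb (by rw [hD, ← hwp])
  · obtain ⟨r, -, hR⟩ := M.R_A2 b hb
    refine (finite_singleton r).subset fun y hy => ?_
    rw [mem_ofPred_eq, M.Gr_A12 b (Or.inr hb), mem_prod, hR] at hy
    exact hy.2

/-- Off `P`, the graphs of the `A₀`-branches are the only part of `G(F)`, and they are
closed; properness separates the branch of `a` from the others. -/
lemma exists_isOpen_inter_GF_eq_G0 (hpp : M.ProperlyParametrized) {a : M.A} (ha : a ∈ M.A0) :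
    ∃ O : Set (ℝ × ℝ), IsOpen O ∧ ∀ p ∈ M.GF, p ∈ O ↔ p ∈ M.G0 a := by
  have := M.finA
  set K : Set (ℝ × ℝ) := ((M.P : Set ℝ) ×ˢ univ) ∪ ⋃ b ∈ {b | b ∈ M.A0 ∧ b ≠ a}, M.Gr b
  have hK : IsClosed K :=
    (M.P.finite_toSet.isClosed.prod isClosed_univ).union
      ((toFinite _).isClosed_biUnion fun b hb => isClosed_Gr hb.1)
  refine ⟨Kᶜ, hK.isOpen_compl, fun p hp => ⟨fun hpK => ?_, fun hpa hpK => ?_⟩⟩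
  · rw [← hpp.1, mem_iUnion] at hp
    obtain ⟨b, hpb⟩ := hp
    by_cases hba : b = a
    · exact hba ▸ hpb
    by_cases hb : b ∈ M.A0
    · exact (hpK (Or.inr (mem_biUnion (show b ∈ {b | b ∈ M.A0 ∧ b ≠ a} from ⟨hb, hba⟩)
        (G0_subset_Gr b hpb)))).elim
    · obtain ⟨q, hq, hD, -⟩ := exists_D_eq_D0_eq_singleton hb
      have hp1 := (Gr_subset_D_prod_R b (G0_subset_Gr b hpb)).1
      rw [hD, mem_singleton_iff] at hp1
      exact (hpK (Or.inl ⟨hp1 ▸ hq, mem_univ _⟩)).elim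
  · rw [M.G0_A0 a ha] at hpa
    have hp1 : p.1 ∉ M.P := notMem_P_of_mem_D0 ha hpa.1
    rcases hpK with hpP | hpGr
    · exact hp1 hpP.1
    · obtain ⟨b, ⟨hb, hba⟩, hpb⟩ : ∃ b, (b ∈ M.A0 ∧ b ≠ a) ∧ p ∈ M.Gr b := by
        simpa using hpGr
      rw [M.Gr_A0 b hb] at hpb
      have hpb0 : p ∈ M.G0 b := by
        rw [M.G0_A0 b hb]
        exact ⟨mem_D0_of_mem_D hb hpb.1 hp1, hpb.2⟩
      exact disjoint_left.1 (hpp.2 b a hba) hpb0 (M.G0_A0 a ha ▸ hpa)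

/-- `a` may follow `c` in `Σ_M`, and over `R(c)` the piece `G₀(a)` is cut out of `G(F)` by an
open set: exactly what appending `a` to an essential word ending in `c` requires. -/
def ExtendsEssentially (c a : M.A) : Prop :=
  M.D0 a ⊆ M.R0 c ∧ (∃ z ∈ M.SFT, z 0 = a) ∧
    ∃ O : Set (ℝ × ℝ), IsOpen O ∧ ∀ p ∈ M.GF, p.1 ∈ M.R c → (p ∈ O ↔ p ∈ M.G0 a)

lemma exists_extendsEssentially_of_A01 (hpp : M.ProperlyParametrized) {c : M.A}
    (hc : c ∈ M.A0 ∪ M.A1) : ∃ a, M.ExtendsEssentially c a := by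
  obtain ⟨a, ha, hac⟩ := exists_A0_D0_subset_R0 hc
  obtain ⟨O, hO, hOa⟩ := exists_isOpen_inter_GF_eq_G0 hpp ha
  exact ⟨a, hac, exists_mem_SFT_of_A01 (Or.inl ha), O, hO, fun p hp _ => hOa p hp⟩

lemma extendsEssentially_of_A2_of_A1 {c b : M.A} (hc : c ∈ M.A2) (hb : b ∈ M.A1)
    (hbc : M.D b = M.R c) : M.ExtendsEssentially c b := by
  refine ⟨?_, exists_mem_SFT_of_A01 (Or.inr hb), univ ×ˢ M.R0 b, isOpen_univ.prod ?_,
    fun p _ hp1 => ?_⟩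
  · rw [M.D0_A12 b (Or.inl hb), M.R0_A2 c hc, hbc]
  · rw [M.R0_A01 b (Or.inr hb)]
    exact isOpen_interior
  · rw [M.G0_A1 b hb, hbc]
    simp [mem_prod, hp1]

lemma exists_extendsEssentially_of_A2 {c : M.A} (hc : c ∈ M.A2) (hcz : ∃ z ∈ M.SFT, z 0 = c)
    (hA1 : ∀ b ∈ M.A1, M.D b ≠ M.R c) : ∃ a, M.ExtendsEssentially c a := by
  obtain ⟨w, -, hRc⟩ := M.R_A2 c hc
  obtain ⟨z, hz, rfl⟩ := hcz
  have hdw : M.D0 (z 1) ⊆ {w} := by simpa [M.R0_A2 _ hc, hRc] using hz 0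
  have hd0 : z 1 ∉ M.A0 := fun hd0 => by
    obtain ⟨p, -, q, -, hpq, -, -, hD0⟩ := exists_D0_eq_Ioo hd0
    exact Ioo_infinite hpq ((finite_singleton w).subset (hD0 ▸ hdw))
  obtain ⟨p, -, hD, hD0⟩ := exists_D_eq_D0_eq_singleton hd0
  obtain rfl : w = p := by simpa [hD0, eq_comm] using hdw
  have hd2 : z 1 ∈ M.A2 :=
    ((M.A_cover _).resolve_left hd0).resolve_left fun hd1 => hA1 _ hd1 (hD.trans hRc.symm)
  obtain ⟨w', -, hRd⟩ := M.R_A2 _ hd2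
  have hfin := finite_fiber_GF (M := M) (w := w) (by simpa [hRc] using hA1)
  refine ⟨z 1, hz 0, ⟨fun k => z (k + 1), fun k => hz (k + 1), rfl⟩,
    univ ×ˢ ({y | (w, y) ∈ M.GF} \ {w'})ᶜ,
    isOpen_univ.prod (hfin.subset sdiff_subset).isClosed.isOpen_compl, fun q hq hq1 => ?_⟩
  rw [hRc, mem_singleton_iff] at hq1
  obtain ⟨q1, q2⟩ := q
  subst hq1
  rw [M.G0_A2 _ hd2, M.Gr_A12 _ (Or.inr hd2), hD, hRd]
  simp [hq]

lemma exists_extendsEssentially (hpp : M.ProperlyParametrized) {c : M.A}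
    (hc : ∃ z ∈ M.SFT, z 0 = c) : ∃ a, M.ExtendsEssentially c a := by
  by_cases hc2 : c ∈ M.A2
  · by_cases hA1 : ∃ b ∈ M.A1, M.D b = M.R c
    · obtain ⟨b, hb, hbc⟩ := hA1
      exact ⟨b, extendsEssentially_of_A2_of_A1 hc2 hb hbc⟩
    · push Not at hA1
      exact exists_extendsEssentially_of_A2 hc2 hc hA1
  · refine exists_extendsEssentially_of_A01 hpp ?_
    rcases M.A_cover c with h | h | h
    exacts [Or.inl h, Or.inr h, absurd h hc2]

lemma init_mem_finTraj {n : ℕ} {x : Fin (n + 1) → ℝ} (hx : x ∈ M.finTraj (n + 1)) :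
    Fin.init x ∈ M.finTraj n :=
  ⟨fun i => hx.1 _, fun i _ => hx.2 i.castSucc (by simp)⟩

lemma mem_GF_of_mem_finTraj {n : ℕ} {x : Fin (n + 1) → ℝ} (hx : x ∈ M.finTraj (n + 1))
    (i : Fin n) : (x i.castSucc, x i.succ) ∈ M.GF :=
  hx.2 i.castSucc (by simp)

lemma specialLabeled_snoc {n : ℕ} (x : Fin (n + 2) → ℝ) (v : Fin n → M.A) (a : M.A) :
    M.SpecialLabeled x (Fin.snoc v a : Fin (n + 1) → M.A) ↔
      M.SpecialLabeled (Fin.init x) v ∧ (x (Fin.last n).castSucc, x (Fin.last n).succ) ∈ M.G0 a := by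
  simp [SpecialLabeled, Fin.forall_fin_succ', Fin.init]

lemma EssentialWord.snoc {n : ℕ} {v : Fin (n + 1) → M.A} (hv : M.EssentialWord v) {a : M.A}
    (ha : M.ExtendsEssentially (v (Fin.last n)) a) :
    M.EssentialWord (Fin.snoc v a : Fin (n + 2) → M.A) := by
  obtain ⟨hva, hz, O, hO, hOa⟩ := ha
  refine ⟨snoc_mem_Lang hv.1 hva hz, ?_⟩
  have hinit : Continuous fun x : M.finTraj (n + 3) =>
      (⟨Fin.init x.1, init_mem_finTraj x.2⟩ : M.finTraj (n + 2)) := by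
    fun_prop
  have hpair : Continuous fun x : M.finTraj (n + 3) =>
      (x.1 (Fin.last (n + 1)).castSucc, x.1 (Fin.last (n + 1)).succ) :=
    ((continuous_apply _).comp continuous_subtype_val).prodMk
      ((continuous_apply _).comp continuous_subtype_val)
  convert (hv.2.preimage hinit).inter (hO.preimage hpair) using 1
  ext x
  simp only [mem_ofPred_eq, mem_preimage, mem_inter_iff, specialLabeled_snoc]
  refine and_congr_right fun hxv => (hOa _ (mem_GF_of_mem_finTraj x.2 _) ?_).symm
  simpa [Fin.init] using (Gr_subset_D_prod_R _ (G0_subset_Gr _ (hxv (Fin.last n)))).2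

lemma exists_essentialWord_snoc (hpp : M.ProperlyParametrized) {n : ℕ} {v : Fin (n + 1) → M.A}
    (hv : M.EssentialWord v) : ∃ a, M.EssentialWord (Fin.snoc v a : Fin (n + 2) → M.A) :=
  let ⟨a, ha⟩ := exists_extendsEssentially hpp (exists_mem_SFT_of_mem_Lang hv.1)
  ⟨a, hv.snoc ha⟩

end MarkovMultiMap

/-- Every essential word extends to an essential word of any greater length. -/
theorem stmt10 (M : MarkovMultiMap) (hpp : M.ProperlyParametrized)
    (n : ℕ) (u : Fin (n + 1) → M.A) (hu : M.EssentialWord u) :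
    ∀ m : ℕ, n ≤ m → ∃ v : Fin (m + 1) → M.A, M.EssentialWord v ∧
      ∃ j : ℕ, ∃ h : j + n ≤ m,
        ∀ i : Fin (n + 1), v ⟨j + (i : ℕ), by have := i.isLt; omega⟩ = u i := by
  intro m hm
  induction m, hm using Nat.le_induction with
  | base => exact ⟨u, hu, 0, (Nat.zero_add n).le, fun i => by simp⟩
  | succ m _ ih =>
    obtain ⟨v, hv, j, hj, hvu⟩ := ih
    obtain ⟨a, hva⟩ := M.exists_essentialWord_snoc hpp hv
    exact ⟨Fin.snoc v a, hva, j, by omega, fun i =>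
      (Fin.snoc_castSucc (α := fun _ => M.A) a v ⟨j + i, by omega⟩ :).trans (hvu i)⟩
end

section
/- Let F be a properly parametrized Markov multi-map. If for every a∈A₀ the graph G(a) of f_a is a straight line segment, then the family of inverse functions {g_u : u∈L} is uniformly equicontinuous. -/
open Set Topology

namespace MarkovMultiMapAux

open MarkovMultiMap

lemma D_sub_unit (M : MarkovMultiMap) (a : M.A) : M.D a ⊆ Set.Icc 0 1 := by
  rcases M.A_cover a with ha | ha
  · obtain ⟨p, hp, q, hq, hpq, -, hD⟩ := M.D_A0 a ha
    rw [hD]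
    exact Set.Icc_subset_Icc (M.P_sub hp).1 (M.P_sub hq).2
  · have ha' : a ∈ M.A1 ∪ M.A2 := by
      rcases ha with h | h
      exacts [Set.mem_union_left _ h, Set.mem_union_right _ h]
    obtain ⟨p, hp, hD⟩ := M.D_A12 a ha'
    rw [hD]
    exact Set.singleton_subset_iff.2 (M.P_sub hp)

lemma R_facts (M : MarkovMultiMap) (b : M.A) : M.R0 b ⊆ M.R b ∧ IsClosed (M.R b) := by
  rcases M.A_cover b with hb | hb | hb
  · obtain ⟨uu, -, vv, -, -, hR⟩ := M.R_A0 b hb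
    rw [M.R0_A01 b (Set.mem_union_left _ hb), hR]
    exact ⟨interior_subset, isClosed_Icc⟩
  · obtain ⟨uu, -, vv, -, -, hR, -⟩ := M.R_A1 b hb
    rw [M.R0_A01 b (Set.mem_union_right _ hb), hR]
    exact ⟨interior_subset, isClosed_Icc⟩
  · obtain ⟨uu, -, hR⟩ := M.R_A2 b hb
    rw [M.R0_A2 b hb]
    exact ⟨subset_rfl, hR ▸ isClosed_singleton⟩

lemma D_sub_R (M : MarkovMultiMap) (a b : M.A) (h : M.D0 a ⊆ M.R0 b) : M.D a ⊆ M.R b := by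
  obtain ⟨hR1, hR2⟩ := R_facts M b
  rcases M.A_cover a with ha | ha
  · obtain ⟨p, -, q, -, hpq, -, hDa⟩ := M.D_A0 a ha
    have hD0a : M.D0 a = Set.Ioo p q := by rw [M.D0_A0 a ha, hDa, interior_Icc]
    have hcl : M.D a = closure (M.D0 a) := by rw [hD0a, hDa, closure_Ioo hpq.ne]
    rw [hcl]
    calc closure (M.D0 a) ⊆ closure (M.R b) := closure_mono (h.trans hR1)
      _ = M.R b := hR2.closure_eq
  · have ha' : a ∈ M.A1 ∪ M.A2 := by
      rcases ha with h' | h'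
      exacts [Set.mem_union_left _ h', Set.mem_union_right _ h']
    rw [← M.D0_A12 a ha']
    exact h.trans hR1

lemma g_affine (M : MarkovMultiMap)
    (hlin : ∀ a ∈ M.A0, ∃ c d : ℝ, ∀ x ∈ M.D a, M.f a x = c * x + d) (a : M.A) :
    ∃ s t : ℝ, ∀ y ∈ M.R a, M.g a y = s * y + t ∧ M.g a y ∈ M.D a := by
  rcases M.A_cover a with ha | ha
  · obtain ⟨c, d, hcd⟩ := hlin a ha
    obtain ⟨uu, -, vv, -, huv, hRa⟩ := M.R_A0 a ha
    obtain ⟨-, hbij⟩ := M.f_homeo a ha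
    have hg := (M.g_A0 a ha).2
    have huuR : uu ∈ M.R a := by rw [hRa]; exact ⟨le_refl _, huv.le⟩
    have hvvR : vv ∈ M.R a := by rw [hRa]; exact ⟨huv.le, le_refl _⟩
    obtain ⟨x1, hx1, hfx1⟩ := hbij.surjOn huuR
    obtain ⟨x2, hx2, hfx2⟩ := hbij.surjOn hvvR
    have hc : c ≠ 0 := by
      intro h0
      have e1 : M.f a x1 = c * x1 + d := hcd x1 hx1
      have e2 : M.f a x2 = c * x2 + d := hcd x2 hx2
      rw [h0] at e1 e2
      have : uu = vv := by rw [← hfx1, ← hfx2, e1, e2]; ring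
      exact huv.ne this
    refine ⟨c⁻¹, -(d / c), fun y hy => ?_⟩
    obtain ⟨hgD, hfg⟩ := hg y hy
    have e3 : M.f a (M.g a y) = c * M.g a y + d := hcd _ hgD
    have e4 : c * M.g a y + d = y := by rw [← e3, hfg]
    refine ⟨?_, hgD⟩
    field_simp
    linarith
  · have ha' : a ∈ M.A1 ∪ M.A2 := by
      rcases ha with h' | h'
      exacts [Set.mem_union_left _ h', Set.mem_union_right _ h']
    obtain ⟨p, -, hDa⟩ := M.D_A12 a ha'
    refine ⟨0, p, fun y hy => ?_⟩
    have hm := M.g_A12 a ha' y hy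
    rw [hDa] at hm
    simp only [Set.mem_singleton_iff] at hm
    refine ⟨by rw [hm]; ring, ?_⟩
    rw [hDa, hm]
    exact rfl

lemma gWord_succ (M : MarkovMultiMap) {n : ℕ} (u : Fin (n + 2) → M.A) (x : ℝ) :
    M.gWord u x = M.g (u 0) (M.gWord (fun i => u i.succ) x) := by
  simp [MarkovMultiMap.gWord, List.ofFn_succ, gWordList]

lemma gWord_affine (M : MarkovMultiMap)
    (hlin : ∀ a ∈ M.A0, ∃ c d : ℝ, ∀ x ∈ M.D a, M.f a x = c * x + d) :
    ∀ n : ℕ, ∀ u : Fin (n + 1) → M.A,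
      (∀ k : Fin n, M.D (u k.succ) ⊆ M.R (u k.castSucc)) →
      ∃ s t : ℝ, ∀ x ∈ M.R (u (Fin.last n)),
        M.gWord u x = s * x + t ∧ M.gWord u x ∈ M.D (u 0) := by
  intro n
  induction n with
  | zero =>
    intro u _
    obtain ⟨s, t, hst⟩ := g_affine M hlin (u 0)
    refine ⟨s, t, fun x hx => ?_⟩
    have : M.gWord u x = M.g (u 0) x := by
      simp [MarkovMultiMap.gWord, List.ofFn_succ, gWordList]
    rw [this]
    exact hst x hx
  | succ n ih =>
    intro u hadj
    set v : Fin (n + 1) → M.A := fun i => u i.succ with hv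
    have hadjv : ∀ k : Fin n, M.D (v k.succ) ⊆ M.R (v k.castSucc) := by
      intro k
      have := hadj k.succ
      have h1 : v k.succ = u k.succ.succ := rfl
      have h2 : v k.castSucc = u k.castSucc.succ := rfl
      rw [h1, h2]
      have h3 : (k.castSucc).succ = (k.succ).castSucc := by
        ext; simp
      rw [h3]
      exact this
    obtain ⟨s, t, hst⟩ := ih v hadjv
    obtain ⟨s0, t0, hs0⟩ := g_affine M hlin (u 0)
    refine ⟨s0 * s, s0 * t + t0, fun x hx => ?_⟩
    have hxlast : x ∈ M.R (v (Fin.last n)) := by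
      have : v (Fin.last n) = u (Fin.last (n + 1)) := by
        show u (Fin.last n).succ = u (Fin.last (n + 1))
        rw [Fin.succ_last]
      rw [this]
      exact hx
    obtain ⟨hgx, hgD⟩ := hst x hxlast
    have hmemR0 : M.gWord v x ∈ M.R (u 0) := by
      have h0 : M.D (v 0) ⊆ M.R (u 0) := by
        have := hadj 0
        have e1 : (0 : Fin (n + 1)).succ = (1 : Fin (n + 2)) := rfl
        have e2 : (0 : Fin (n + 1)).castSucc = (0 : Fin (n + 2)) := rfl
        rw [e1, e2] at this
        exact this
      exact h0 (by exact hgD)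
    obtain ⟨e5, e6⟩ := hs0 _ hmemR0
    rw [gWord_succ M u x]
    constructor
    · rw [show M.gWord (fun i => u i.succ) x = M.gWord v x from rfl, e5, hgx]
      ring
    · rw [show M.gWord (fun i => u i.succ) x = M.gWord v x from rfl, e5]
      rw [e5] at e6
      exact e6


lemma key (M : MarkovMultiMap)
    (hlin : ∀ a ∈ M.A0, ∃ c d : ℝ, ∀ x ∈ M.D a, M.f a x = c * x + d)
    (γ : ℝ) (hγpos : 0 < γ) (ε : ℝ) (hε : 0 < ε)
    {n : ℕ} {u : Fin (n + 1) → M.A} {aa bb s t x y : ℝ}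
    (hγab : γ ≤ bb - aa) (hab : aa < bb) (hR : M.R (u (Fin.last n)) = Set.Icc aa bb)
    (hst : ∀ x ∈ M.R (u (Fin.last n)),
      M.gWord u x = s * x + t ∧ M.gWord u x ∈ M.D (u 0))
    (hx : x ∈ M.R (u (Fin.last n))) (hy : y ∈ M.R (u (Fin.last n)))
    (hxy : |x - y| < γ * ε) : |M.gWord u x - M.gWord u y| < ε := by
  have haaR : aa ∈ M.R (u (Fin.last n)) := by rw [hR]; exact ⟨le_refl _, hab.le⟩
  have hbbR : bb ∈ M.R (u (Fin.last n)) := by rw [hR]; exact ⟨hab.le, le_refl _⟩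
  obtain ⟨exa, mxa⟩ := hst aa haaR
  obtain ⟨exb, mxb⟩ := hst bb hbbR
  obtain ⟨ex, -⟩ := hst x hx
  obtain ⟨ey, -⟩ := hst y hy
  have ma := D_sub_unit M (u 0) mxa
  have mb := D_sub_unit M (u 0) mxb
  rw [exa] at ma
  rw [exb] at mb
  have hsbound : |s| * (bb - aa) ≤ 1 := by
    have h1 : |s * bb + t - (s * aa + t)| ≤ 1 := by
      rw [abs_sub_le_iff]
      constructor <;> [skip; skip] <;>
        · rcases ma with ⟨ma1, ma2⟩
          rcases mb with ⟨mb1, mb2⟩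
          linarith
    have h2 : s * bb + t - (s * aa + t) = s * (bb - aa) := by ring
    rw [h2, abs_mul, abs_of_pos (by linarith : (0:ℝ) < bb - aa)] at h1
    exact h1
  rw [ex, ey]
  have h3 : s * x + t - (s * y + t) = s * (x - y) := by ring
  rw [h3, abs_mul]
  have hba : (0:ℝ) < bb - aa := by linarith
  have hs : |s| ≤ 1 / (bb - aa) := by
    rw [le_div_iff₀ hba]
    exact hsbound
  calc |s| * |x - y| ≤ (1 / (bb - aa)) * |x - y| :=
        mul_le_mul_of_nonneg_right hs (abs_nonneg _)
    _ < (1 / (bb - aa)) * (γ * ε) := by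
        apply mul_lt_mul_of_pos_left hxy
        positivity
    _ ≤ (1 / γ) * (γ * ε) := by
        apply mul_le_mul_of_nonneg_right _ (by positivity)
        apply one_div_le_one_div_of_le hγpos
        linarith [hγab]
    _ = ε := by field_simp

end MarkovMultiMapAux

/-- If every `G(a)`, `a ∈ A₀`, is a straight line segment, then the family
`{g_u : u ∈ L}` is uniformly equicontinuous. -/
theorem stmt15 (M : MarkovMultiMap) (hpp : M.ProperlyParametrized)
    (hlin : ∀ a ∈ M.A0, ∃ c d : ℝ, ∀ x ∈ M.D a, M.f a x = c * x + d) :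
    ∀ ε : ℝ, 0 < ε → ∃ δ : ℝ, 0 < δ ∧ ∀ n : ℕ, ∀ u : Fin (n + 1) → M.A,
      u ∈ M.Lang (n + 1) →
      ∀ x ∈ M.R (u (Fin.last n)), ∀ y ∈ M.R (u (Fin.last n)),
        |x - y| < δ → |M.gWord u x - M.gWord u y| < ε := by
  intro ε hε
  classical
  set Q : Finset ℝ :=
    ((M.P ×ˢ M.P).filter fun pq => pq.1 < pq.2).image (fun pq : ℝ × ℝ => pq.2 - pq.1) with hQ
  have hQne : Q.Nonempty := by
    refine ⟨1 - 0, Finset.mem_image.2 ⟨(0, 1), ?_, rfl⟩⟩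
    refine Finset.mem_filter.2 ⟨Finset.mem_product.2 ⟨M.P_zero, M.P_one⟩, by norm_num⟩
  set γ : ℝ := Q.min' hQne with hγdef
  have hQpos : ∀ r ∈ Q, 0 < r := by
    intro r hr
    rw [hQ] at hr
    obtain ⟨pq, hpq, rfl⟩ := Finset.mem_image.1 hr
    linarith [(Finset.mem_filter.1 hpq).2]
  have hγpos : 0 < γ := hQpos γ (Q.min'_mem hQne)
  have hγle : ∀ p ∈ M.P, ∀ q ∈ M.P, p < q → γ ≤ q - p := by
    intro p hp q hq hpq
    apply Finset.min'_le
    exact Finset.mem_image.2 ⟨(p, q), Finset.mem_filter.2 ⟨Finset.mem_product.2 ⟨hp, hq⟩, hpq⟩, rfl⟩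
  refine ⟨γ * ε, mul_pos hγpos hε, fun n u hu x hx y hy hxy => ?_⟩
  -- adjacency from the language condition
  obtain ⟨z, hzSFT, m, huz⟩ := hu
  have hadj : ∀ k : Fin n, M.D (u k.succ) ⊆ M.R (u k.castSucc) := by
    intro k
    have h1 : u k.succ = z (m + ((k : ℕ) + 1)) := by
      have := huz k.succ
      simpa [Fin.val_succ] using this
    have h2 : u k.castSucc = z (m + (k : ℕ)) := by
      have := huz k.castSucc
      simpa [Fin.coe_castSucc] using this
    have h3 : M.D0 (z (m + (k : ℕ) + 1)) ⊆ M.R0 (z (m + (k : ℕ))) := hzSFT (m + (k : ℕ))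
    have h4 : m + ((k : ℕ) + 1) = m + (k : ℕ) + 1 := by ring
    rw [h1, h2, h4]
    exact MarkovMultiMapAux.D_sub_R M _ _ h3
  obtain ⟨s, t, hst⟩ := MarkovMultiMapAux.gWord_affine M hlin n u hadj
  -- case on the shape of R (u (Fin.last n))
  rcases M.A_cover (u (Fin.last n)) with ha | ha | ha
  case _ =>
    obtain ⟨aa, haP, bb, hbP, hab, hR⟩ := M.R_A0 (u (Fin.last n)) ha
    exact MarkovMultiMapAux.key M hlin γ hγpos ε hε (hγle aa haP bb hbP hab) hab hR hst hx hy hxy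
  case _ =>
    obtain ⟨aa, haP, bb, hbP, hab, hR, -⟩ := M.R_A1 (u (Fin.last n)) ha
    exact MarkovMultiMapAux.key M hlin γ hγpos ε hε (hγle aa haP bb hbP hab) hab hR hst hx hy hxy
  case _ =>
    obtain ⟨w, -, hR⟩ := M.R_A2 (u (Fin.last n)) ha
    rw [hR] at hx hy
    simp only [Set.mem_singleton_iff] at hx hy
    rw [hx, hy]
    simpa using hε
end
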